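/- arXiv:1010.2036 — 2 statements merged into one kernel-verified Lean document; each statement's English description precedes it below -/
import Mathlib

section
/- (Van der Corput–type lemma of Bjork–Arhipov.) Let m ≥ 2 be an integer and let I ⊂ ℝ be a compact interval. Suppose f : I → ℝ is smooth and there are constants c₁, c₂ > 0 such that c₁ ≤ Σ_{j=2}^{m} |f^{(j)}(s)| ≤ c₂ for every s ∈ I. Then there is a constant C, depending only on c₁, c₂, m and the length of I, such that for every g ∈ C¹(I) and every λ ∈ ℝ, |∫_I e^{iλ f(s)} g(s) ds| ≤ C ‖g‖_{C¹(I)} (1 + |λ|)^{-1/m}. -/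
open MeasureTheory intervalIntegral Set
open scoped ContDiff

noncomputable section

namespace VDC

def E (lam : ℝ) (f : ℝ → ℝ) (s : ℝ) : ℂ := Complex.exp (Complex.I * (lam : ℂ) * (f s : ℂ))

lemma norm_E (lam : ℝ) (f : ℝ → ℝ) (s : ℝ) : ‖E lam f s‖ = 1 := by
  simp [E, Complex.norm_exp]

lemma E_hasDerivAt (lam : ℝ) {f : ℝ → ℝ} {f' : ℝ} {s : ℝ} (hf : HasDerivAt f f' s) :
    HasDerivAt (E lam f) (E lam f s * (Complex.I * lam * f')) s := by
  have h1 : HasDerivAt (fun t : ℝ => (f t : ℂ)) (f' : ℂ) s := hf.ofReal_comp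
  have h2 : HasDerivAt (fun t : ℝ => Complex.I * (lam : ℂ) * (f t : ℂ))
      (Complex.I * lam * f') s := h1.const_mul _
  exact h2.cexp

lemma E_continuous (lam : ℝ) {f : ℝ → ℝ} (hf : Continuous f) : Continuous (E lam f) :=
  Complex.continuous_exp.comp (by continuity)

lemma contDiff_deriv {f : ℝ → ℝ} (hf : ContDiff ℝ ∞ f) : ContDiff ℝ ∞ (deriv f) :=
  (contDiff_infty_iff_deriv.mp hf).2

lemma hasDerivAt_of_contDiff {f : ℝ → ℝ} (hf : ContDiff ℝ ∞ f) (s : ℝ) :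
    HasDerivAt f (deriv f s) s :=
  (hf.differentiable (by simp) s).hasDerivAt

lemma contDiff_iteratedDeriv {f : ℝ → ℝ} (n : ℕ) (hf : ContDiff ℝ ∞ f) :
    ContDiff ℝ ∞ (iteratedDeriv n f) := by
  rw [iteratedDeriv_eq_iterate]
  exact hf.iterate_deriv n

lemma iteratedDeriv_hasDerivAt {f : ℝ → ℝ} (n : ℕ) (hf : ContDiff ℝ ∞ f) (s : ℝ) :
    HasDerivAt (iteratedDeriv n f) (iteratedDeriv (n + 1) f s) s := by
  rw [iteratedDeriv_succ]
  exact hasDerivAt_of_contDiff (contDiff_iteratedDeriv n hf) s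

/-- A continuous function with `μ ≤ |h|` on an interval has constant sign there. -/
lemma sign_constant {h : ℝ → ℝ} {u v μ : ℝ} (huv : u ≤ v) (hμ : 0 < μ)
    (hc : ContinuousOn h (Icc u v)) (hlow : ∀ s ∈ Icc u v, μ ≤ |h s|) :
    (∀ s ∈ Icc u v, μ ≤ h s) ∨ (∀ s ∈ Icc u v, h s ≤ -μ) := by
  have hne : ∀ s ∈ Icc u v, h s ≠ 0 := by
    intro s hs h0
    have := hlow s hs
    rw [h0] at this; simp at this; linarith
  by_cases hu : 0 < h u
  · left
    intro s hs
    by_contra hcon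
    push_neg at hcon
    have habs := hlow s hs
    have hneg : h s ≤ -μ := by
      rcases abs_cases (h s) with ⟨he, _⟩ | ⟨he, _⟩
      · linarith
      · linarith
    have hsub : Icc u s ⊆ Icc u v := Icc_subset_Icc le_rfl hs.2
    have := intermediate_value_Icc' hs.1 (hc.mono hsub)
    have h0mem : (0:ℝ) ∈ Icc (h s) (h u) := ⟨by linarith, by linarith⟩
    obtain ⟨c, hc1, hc2⟩ := this h0mem
    exact hne c (hsub hc1) hc2
  · right
    push_neg at hu
    intro s hs
    by_contra hcon
    push_neg at hcon
    have habs := hlow s hs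
    have hpos : μ ≤ h s := by
      rcases abs_cases (h s) with ⟨he, _⟩ | ⟨he, _⟩
      · linarith
      · linarith
    have hsub : Icc u s ⊆ Icc u v := Icc_subset_Icc le_rfl hs.2
    have := intermediate_value_Icc hs.1 (hc.mono hsub)
    have h0mem : (0:ℝ) ∈ Icc (h u) (h s) := ⟨by linarith, by linarith⟩
    obtain ⟨c, hc1, hc2⟩ := this h0mem
    exact hne c (hsub hc1) hc2

/-- Replacing `f` by `-f` conjugates the oscillatory integral, preserving its norm. -/
lemma norm_integral_E_neg (lam u v : ℝ) (f : ℝ → ℝ) :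
    ‖∫ s in u..v, E lam (fun t => -f t) s‖ = ‖∫ s in u..v, E lam f s‖ := by
  have hpt : ∀ s : ℝ, E lam (fun t => -f t) s = (starRingEnd ℂ) (E lam f s) := by
    intro s
    rw [E, E, ← Complex.exp_conj]
    congr 1
    simp only [map_mul, Complex.conj_I, Complex.conj_ofReal, Complex.ofReal_neg]
    ring
  have hconj : ∫ s in u..v, E lam (fun t => -f t) s
      = (starRingEnd ℂ) (∫ s in u..v, E lam f s) := by
    simp only [hpt]
    rw [intervalIntegral_eq_integral_uIoc, intervalIntegral_eq_integral_uIoc,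
      integral_conj]
    rcases le_or_gt u v with h | h
    · simp [h]
    · simp [not_le.mpr h, neg_one_smul, map_neg]
  rw [hconj, RCLike.norm_conj]

lemma vdc1 (f : ℝ → ℝ) (hf : ContDiff ℝ ∞ f) (u v μ lam : ℝ) (huv : u ≤ v)
    (hμ : 0 < μ) (hlam : 0 < lam)
    (hlow : ∀ s ∈ Icc u v, μ ≤ |deriv f s|)
    (hsign : (∀ s ∈ Icc u v, 0 ≤ deriv (deriv f) s) ∨
      (∀ s ∈ Icc u v, deriv (deriv f) s ≤ 0)) :
    ‖∫ s in u..v, E lam f s‖ ≤ 4 / (lam * μ) := by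
  set f1 := deriv f with hf1def
  set f2 := deriv f1 with hf2def
  have hf1 : ContDiff ℝ ∞ f1 := contDiff_deriv hf
  have hcf1 : Continuous f1 := hf1.continuous
  have hcf2 : Continuous f2 := (contDiff_deriv hf1).continuous
  have hne : ∀ s ∈ Icc u v, f1 s ≠ 0 := by
    intro s hs
    have := hlow s hs
    intro h; rw [h] at this; simp at this; linarith
  have hlamne : (Complex.I * (lam : ℂ)) ≠ 0 := by
    simp [Complex.I_ne_zero, Complex.ofReal_ne_zero, ne_of_gt hlam]
  have hdenne : ∀ s ∈ Icc u v, (Complex.I * (lam : ℂ) * (f1 s : ℂ)) ≠ 0 := by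
    intro s hs
    exact mul_ne_zero hlamne (by simpa using hne s hs)
  -- the antiderivative-ish function
  set W : ℝ → ℂ := fun s => -(Complex.I * lam * f2 s) / (Complex.I * lam * f1 s) ^ 2 with hW
  set H : ℝ → ℂ := fun s => E lam f s / (Complex.I * lam * f1 s) with hH
  have hHderiv : ∀ s ∈ Icc u v, HasDerivAt H (E lam f s + E lam f s * W s) s := by
    intro s hs
    have hE := E_hasDerivAt lam (hasDerivAt_of_contDiff hf s)
    have hG0 : HasDerivAt (fun t : ℝ => Complex.I * (lam : ℂ) * (f1 t : ℂ))
        (Complex.I * lam * f2 s) s :=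
      (hasDerivAt_of_contDiff hf1 s).ofReal_comp.const_mul _
    have hD := hE.div hG0 (hdenne s hs)
    convert hD using 1
    all_goals try rfl
    have hI := Complex.I_ne_zero
    have hl : (lam : ℂ) ≠ 0 := by exact_mod_cast ne_of_gt hlam
    have hf1s : ((f1 s : ℝ) : ℂ) ≠ 0 := by simpa using hne s hs
    rw [hW]
    field_simp
    ring
  have hEcont : Continuous (E lam f) := E_continuous lam hf.continuous
  have hWcont : ContinuousOn W (Icc u v) := by
    apply ContinuousOn.div
    · exact (Continuous.continuousOn (by continuity))
    · exact (Continuous.continuousOn (by continuity))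
    · intro s hs; exact pow_ne_zero _ (hdenne s hs)
  have huIcc : uIcc u v = Icc u v := uIcc_of_le huv
  have hintE : IntervalIntegrable (E lam f) volume u v := hEcont.intervalIntegrable u v
  have hintEW : IntervalIntegrable (fun s => E lam f s * W s) volume u v := by
    apply ContinuousOn.intervalIntegrable
    rw [huIcc]; exact hEcont.continuousOn.mul hWcont
  have hint1 : IntervalIntegrable (fun s => E lam f s + E lam f s * W s) volume u v := by
    apply ContinuousOn.intervalIntegrable
    rw [huIcc]; exact hEcont.continuousOn.add (hEcont.continuousOn.mul hWcont)
  have key : ∫ s in u..v, (E lam f s + E lam f s * W s) = H v - H u :=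
    integral_eq_sub_of_hasDerivAt (fun s hs => hHderiv s (huIcc ▸ hs)) hint1
  have split : ∫ s in u..v, E lam f s = H v - H u - ∫ s in u..v, E lam f s * W s := by
    have := integral_add hintE hintEW
    rw [this] at key
    linear_combination key
  -- bound on ‖H s‖
  have hnormD : ∀ x : ℝ, ‖Complex.I * (lam : ℂ) * (x : ℂ)‖ = lam * |x| := by
    intro x
    simp [norm_mul, Complex.norm_I, Complex.norm_real, Real.norm_eq_abs, abs_of_pos hlam]
  have hnormH : ∀ s ∈ Icc u v, ‖H s‖ ≤ 1 / (lam * μ) := by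
    intro s hs
    have h1 : ‖H s‖ = 1 / (lam * |f1 s|) := by
      rw [hH]; simp only []
      rw [norm_div, norm_E, hnormD]
    rw [h1]
    apply one_div_le_one_div_of_le (by positivity)
    exact mul_le_mul_of_nonneg_left (hlow s hs) hlam.le
  -- pointwise norm of E*W
  have hEW : ∀ s ∈ Icc u v, ‖E lam f s * W s‖ = |f2 s| / (lam * (f1 s) ^ 2) := by
    intro s hs
    rw [norm_mul, norm_E, one_mul, hW]
    simp only []
    rw [norm_div, norm_neg, norm_pow, hnormD, hnormD]
    have h2 : (lam * |f1 s|) ^ 2 = lam * (lam * (f1 s) ^ 2) := by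
      rw [mul_pow, sq_abs]; ring
    rw [h2, mul_div_mul_left _ _ (ne_of_gt hlam)]
  -- the FTC bound on the integral of |f2|/(lam f1^2)
  have hψ : ∀ s ∈ Icc u v, HasDerivAt (fun t => -lam⁻¹ * (f1 t)⁻¹)
      (lam⁻¹ * (f2 s / (f1 s) ^ 2)) s := by
    intro s hs
    have h0 := ((hasDerivAt_of_contDiff hf1 s).inv (hne s hs)).const_mul (-lam⁻¹)
    convert h0 using 1
    all_goals try rfl
    field_simp
    rfl
  have hψcont : ContinuousOn (fun s => lam⁻¹ * (f2 s / (f1 s) ^ 2)) (uIcc u v) := by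
    rw [huIcc]
    apply ContinuousOn.mul continuousOn_const
    apply ContinuousOn.div hcf2.continuousOn (by fun_prop)
    intro s hs; exact pow_ne_zero _ (hne s hs)
  have hψint : ∫ s in u..v, lam⁻¹ * (f2 s / (f1 s) ^ 2)
      = -lam⁻¹ * (f1 v)⁻¹ - -lam⁻¹ * (f1 u)⁻¹ :=
    integral_eq_sub_of_hasDerivAt (fun s hs => hψ s (huIcc ▸ hs))
      hψcont.intervalIntegrable
  have hψbd : ∀ s ∈ Icc u v, |(-lam⁻¹ * (f1 s)⁻¹ : ℝ)| ≤ 1 / (lam * μ) := by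
    intro s hs
    rw [abs_mul, abs_neg, abs_inv, abs_inv, abs_of_pos hlam]
    rw [one_div, mul_inv]
    apply mul_le_mul_of_nonneg_left _ (by positivity)
    exact inv_anti₀ hμ (hlow s hs)
  have hmem_u : u ∈ Icc u v := ⟨le_refl u, huv⟩
  have hmem_v : v ∈ Icc u v := ⟨huv, le_refl v⟩
  have habs : (∫ s in u..v, |f2 s| / (lam * (f1 s) ^ 2)) ≤ 2 / (lam * μ) := by
    have h2sum : 2 / (lam * μ) = 1 / (lam * μ) + 1 / (lam * μ) := by ring
    rcases hsign with hpos | hneg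
    · have hcongr : EqOn (fun s => |f2 s| / (lam * (f1 s) ^ 2))
          (fun s => lam⁻¹ * (f2 s / (f1 s) ^ 2)) (uIcc u v) := by
        intro s hs
        rw [huIcc] at hs
        simp only []
        rw [abs_of_nonneg (hpos s hs)]
        field_simp
      rw [integral_congr hcongr, hψint]
      have b1 := hψbd v hmem_v
      have b2 := hψbd u hmem_u
      rw [abs_le] at b1 b2
      rw [h2sum]
      linarith [b1.1, b1.2, b2.1, b2.2]
    · have hcongr : EqOn (fun s => |f2 s| / (lam * (f1 s) ^ 2))
          (fun s => -(lam⁻¹ * (f2 s / (f1 s) ^ 2))) (uIcc u v) := by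
        intro s hs
        rw [huIcc] at hs
        simp only []
        rw [abs_of_nonpos (hneg s hs)]
        field_simp
      rw [integral_congr hcongr, intervalIntegral.integral_neg, hψint]
      have b1 := hψbd v hmem_v
      have b2 := hψbd u hmem_u
      rw [abs_le] at b1 b2
      rw [h2sum]
      linarith [b1.1, b1.2, b2.1, b2.2]
  have hEWnorm : ‖∫ s in u..v, E lam f s * W s‖ ≤ 2 / (lam * μ) := by
    calc ‖∫ s in u..v, E lam f s * W s‖ ≤ ∫ s in u..v, ‖E lam f s * W s‖ :=
          norm_integral_le_integral_norm huv
      _ = ∫ s in u..v, |f2 s| / (lam * (f1 s) ^ 2) := by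
          apply integral_congr
          intro s hs
          rw [huIcc] at hs
          exact hEW s hs
      _ ≤ 2 / (lam * μ) := habs
  calc ‖∫ s in u..v, E lam f s‖ = ‖H v - H u - ∫ s in u..v, E lam f s * W s‖ := by rw [split]
    _ ≤ ‖H v - H u‖ + ‖∫ s in u..v, E lam f s * W s‖ := norm_sub_le _ _
    _ ≤ (‖H v‖ + ‖H u‖) + ‖∫ s in u..v, E lam f s * W s‖ := by
        have := norm_sub_le (H v) (H u); linarith
    _ ≤ (1 / (lam * μ) + 1 / (lam * μ)) + 2 / (lam * μ) := by
        have h1 := hnormH v hmem_v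
        have h2 := hnormH u hmem_u
        linarith
    _ = 4 / (lam * μ) := by ring

section Split

/-- One step of the classical van der Corput induction (one-sided sign version). -/
lemma vdc_split_main (k : ℕ) (hk : 1 ≤ k) (A : ℝ) (hA : 0 < A)
    (IH : ∀ f : ℝ → ℝ, ContDiff ℝ ∞ f → ∀ u v μ lam : ℝ, u ≤ v → 0 < μ → 0 < lam →
      (∀ s ∈ Icc u v, μ ≤ |iteratedDeriv k f s|) →
      ((∀ s ∈ Icc u v, 0 ≤ iteratedDeriv (k+1) f s) ∨
        (∀ s ∈ Icc u v, iteratedDeriv (k+1) f s ≤ 0)) →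
      ‖∫ s in u..v, E lam f s‖ ≤ A * (lam * μ) ^ (-(1:ℝ)/k)) :
    ∀ f : ℝ → ℝ, ContDiff ℝ ∞ f → ∀ u v μ lam : ℝ, u ≤ v → 0 < μ → 0 < lam →
      (∀ s ∈ Icc u v, μ ≤ iteratedDeriv (k+1) f s) →
      ‖∫ s in u..v, E lam f s‖ ≤ (2*A+2) * (lam * μ) ^ (-(1:ℝ)/(k+1)) := by
  intro f hf u v μ lam huv hμ hlam hlow
  set g := iteratedDeriv k f with hgdef
  set g' := iteratedDeriv (k+1) f with hg'def
  have hgc : Continuous g := (contDiff_iteratedDeriv k hf).continuous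
  have hg'c : Continuous g' := (contDiff_iteratedDeriv (k+1) hf).continuous
  have hgd : ∀ s : ℝ, HasDerivAt g (g' s) s := iteratedDeriv_hasDerivAt k hf
  have hEc : Continuous (E lam f) := E_continuous lam hf.continuous
  have hgmono : MonotoneOn g (Icc u v) := by
    apply (StrictMonoOn.monotoneOn ∘ fun h => h) ?_
    apply strictMonoOn_of_deriv_pos (convex_Icc u v) hgc.continuousOn
    intro x hx
    rw [interior_Icc] at hx
    rw [(hgd x).deriv]
    exact lt_of_lt_of_le hμ (hlow x ⟨hx.1.le, hx.2.le⟩)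
  set ρ : ℝ := μ ^ ((k:ℝ)/(k+1)) * lam ^ (-(1:ℝ)/(k+1)) with hρdef
  have hρ : 0 < ρ := by positivity
  -- left piece
  have hp : ∃ p ∈ Icc u v, ‖∫ s in u..p, E lam f s‖ ≤ A * (lam*ρ) ^ (-(1:ℝ)/k) ∧
      (∀ s ∈ Icc u v, p < s → -ρ < g s) ∧ (g p ≤ -ρ ∨ p = u) := by
    set L : Set ℝ := Icc u v ∩ g ⁻¹' (Iic (-ρ)) with hLdef
    have hLclosed : IsClosed L := isClosed_Icc.inter (isClosed_Iic.preimage hgc)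
    by_cases hL : L.Nonempty
    · have hbdd : BddAbove L := ⟨v, fun x hx => hx.1.2⟩
      have hpL : sSup L ∈ L := hLclosed.csSup_mem hL hbdd
      refine ⟨sSup L, hpL.1, ?_, ?_, Or.inl hpL.2⟩
      · apply IH f hf u (sSup L) ρ lam hpL.1.1 hρ hlam
        · intro s hs
          have hsv : s ∈ Icc u v := ⟨hs.1, hs.2.trans hpL.1.2⟩
          have : g s ≤ g (sSup L) := hgmono hsv hpL.1 hs.2
          have : g s ≤ -ρ := this.trans hpL.2
          calc ρ ≤ -(g s) := by linarith
            _ ≤ |g s| := neg_le_abs _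
        · exact Or.inl fun s hs => le_trans hμ.le
            (hlow s ⟨hs.1, hs.2.trans hpL.1.2⟩)
      · intro s hs hlt
        by_contra hcon
        push_neg at hcon
        have : s ∈ L := ⟨hs, hcon⟩
        exact absurd (le_csSup hbdd this) (not_le.mpr hlt)
    · refine ⟨u, ⟨le_refl u, huv⟩, ?_, ?_, Or.inr rfl⟩
      · rw [intervalIntegral.integral_same]
        simp only [norm_zero]
        positivity
      · intro s hs _
        by_contra hcon
        push_neg at hcon
        exact hL ⟨s, hs, hcon⟩
  -- right piece
  have hq : ∃ q ∈ Icc u v, ‖∫ s in q..v, E lam f s‖ ≤ A * (lam*ρ) ^ (-(1:ℝ)/k) ∧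
      (∀ s ∈ Icc u v, s < q → g s < ρ) ∧ (ρ ≤ g q ∨ q = v) := by
    set R : Set ℝ := Icc u v ∩ g ⁻¹' (Ici ρ) with hRdef
    have hRclosed : IsClosed R := isClosed_Icc.inter (isClosed_Ici.preimage hgc)
    by_cases hR : R.Nonempty
    · have hbdd : BddBelow R := ⟨u, fun x hx => hx.1.1⟩
      have hqR : sInf R ∈ R := hRclosed.csInf_mem hR hbdd
      refine ⟨sInf R, hqR.1, ?_, ?_, Or.inl hqR.2⟩
      · apply IH f hf (sInf R) v ρ lam hqR.1.2 hρ hlam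
        · intro s hs
          have hsv : s ∈ Icc u v := ⟨hqR.1.1.trans hs.1, hs.2⟩
          have : g (sInf R) ≤ g s := hgmono hqR.1 hsv hs.1
          have : ρ ≤ g s := le_trans hqR.2 this
          exact this.trans (le_abs_self _)
        · exact Or.inl fun s hs => le_trans hμ.le
            (hlow s ⟨hqR.1.1.trans hs.1, hs.2⟩)
      · intro s hs hlt
        by_contra hcon
        push_neg at hcon
        have : s ∈ R := ⟨hs, hcon⟩
        exact absurd (csInf_le hbdd this) (not_le.mpr hlt)
    · refine ⟨v, ⟨huv, le_refl v⟩, ?_, ?_, Or.inr rfl⟩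
      · rw [intervalIntegral.integral_same]
        simp only [norm_zero]
        positivity
      · intro s hs _
        by_contra hcon
        push_neg at hcon
        exact hR ⟨s, hs, hcon⟩
  obtain ⟨p, hpmem, hpbd, hpprop, hpval⟩ := hp
  obtain ⟨q, hqmem, hqbd, hqprop, hqval⟩ := hq
  have hpq : p ≤ q := by
    rcases hpval with hgp | rfl
    · rcases hqval with hgq | rfl
      · by_contra hcon
        push_neg at hcon
        have := hgmono hqmem hpmem hcon.le
        linarith
      · exact hpmem.2
    · exact hqmem.1
  -- middle length bound
  have hmid : q - p ≤ 2 * ρ / μ := by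
    by_contra hcon
    push_neg at hcon
    set η : ℝ := (q - p - 2*ρ/μ)/4 with hηdef
    have hη : 0 < η := by
      have : 0 < q - p - 2*ρ/μ := by linarith
      positivity
    set p' : ℝ := p + η with hp'def
    set q' : ℝ := q - η with hq'def
    have h2ρμ : 0 < 2*ρ/μ := by positivity
    have hp'q' : p' < q' := by
      simp only [hp'def, hq'def, hηdef]
      linarith
    have hgap : 2*ρ/μ < q' - p' := by
      simp only [hp'def, hq'def, hηdef]
      linarith
    have hp'mem : p' ∈ Icc u v := ⟨le_trans hpmem.1 (by simp [hp'def]; linarith),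
      le_trans (by simp [hp'def, hq'def] at hp'q' ⊢; linarith : p' ≤ q) hqmem.2⟩
    have hq'mem : q' ∈ Icc u v := ⟨le_trans hpmem.1 (le_trans (by linarith) hp'q'.le),
      le_trans (by simp [hq'def]; linarith) hqmem.2⟩
    have hslope := exists_hasDerivAt_eq_slope g g' hp'q'
      (hgc.continuousOn) (fun x _ => hgd x)
    obtain ⟨c, hcmem, hceq⟩ := hslope
    have hcIcc : c ∈ Icc u v := ⟨le_trans hp'mem.1 hcmem.1.le, le_trans hcmem.2.le hq'mem.2⟩
    have hμc : μ ≤ g' c := hlow c hcIcc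
    have hgp' : -ρ < g p' := hpprop p' hp'mem (by simp [hp'def]; linarith)
    have hgq' : g q' < ρ := hqprop q' hq'mem (by simp [hq'def]; linarith)
    have hnum : g q' - g p' < μ * (q' - p') := by
      have h1 : g q' - g p' < 2 * ρ := by linarith
      have h2 : 2 * ρ < μ * (q' - p') := by
        rw [div_lt_iff₀ hμ] at hgap
        linarith [mul_comm μ (q' - p')]
      linarith
    rw [hceq] at hμc
    rw [le_div_iff₀ (by linarith : (0:ℝ) < q' - p')] at hμc
    linarith
  -- combine the three pieces
  have hii : ∀ x y : ℝ, IntervalIntegrable (E lam f) volume x y :=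
    fun x y => hEc.intervalIntegrable x y
  have hsplit : ∫ s in u..v, E lam f s =
      (∫ s in u..p, E lam f s) + (∫ s in p..q, E lam f s) + (∫ s in q..v, E lam f s) := by
    rw [integral_add_adjacent_intervals (hii u p) (hii p q),
      integral_add_adjacent_intervals (hii u q) (hii q v)]
  have hmidbd : ‖∫ s in p..q, E lam f s‖ ≤ 2 * ρ / μ := by
    have h1 : ‖∫ s in p..q, E lam f s‖ ≤ 1 * |q - p| :=
      intervalIntegral.norm_integral_le_of_norm_le_const
        (fun x _ => le_of_eq (norm_E lam f x))
    rw [one_mul, abs_of_nonneg (by linarith : (0:ℝ) ≤ q - p)] at h1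
    linarith
  -- rpow arithmetic
  have hκ : (0:ℝ) < (k:ℝ) := by exact_mod_cast hk
  have hκ1 : (0:ℝ) < (k:ℝ) + 1 := by linarith
  have hcast : ((k+1:ℕ):ℝ) = (k:ℝ) + 1 := by push_cast; ring
  have hlamμ : 0 < lam * μ := mul_pos hlam hμ
  have key1 : (lam * ρ) ^ (-(1:ℝ)/k) = (lam * μ) ^ (-(1:ℝ)/((k:ℝ)+1)) := by
    have hlamρ : lam * ρ = (lam * μ) ^ ((k:ℝ)/((k:ℝ)+1)) := by
      rw [hρdef, Real.mul_rpow hlam.le hμ.le]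
      rw [show lam * (μ ^ ((k:ℝ)/((k:ℝ)+1)) * lam ^ (-(1:ℝ)/((k:ℝ)+1)))
        = (lam ^ (1:ℝ) * lam ^ (-(1:ℝ)/((k:ℝ)+1))) * μ ^ ((k:ℝ)/((k:ℝ)+1)) by
          rw [Real.rpow_one]; ring]
      rw [← Real.rpow_add hlam]
      congr 1
      field_simp
      ring_nf
    rw [hlamρ, ← Real.rpow_mul hlamμ.le]
    congr 1
    field_simp
  have key2 : ρ / μ = (lam * μ) ^ (-(1:ℝ)/((k:ℝ)+1)) := by
    rw [hρdef, Real.mul_rpow hlam.le hμ.le]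
    rw [div_eq_iff (ne_of_gt hμ)]
    rw [show lam ^ (-(1:ℝ)/((k:ℝ)+1)) * μ ^ (-(1:ℝ)/((k:ℝ)+1)) * μ
      = lam ^ (-(1:ℝ)/((k:ℝ)+1)) * (μ ^ (-(1:ℝ)/((k:ℝ)+1)) * μ ^ (1:ℝ)) by
        rw [Real.rpow_one]; ring]
    rw [← Real.rpow_add hμ]
    rw [show -(1:ℝ)/((k:ℝ)+1) + 1 = (k:ℝ)/((k:ℝ)+1) by field_simp; ring]
    ring
  calc ‖∫ s in u..v, E lam f s‖
      ≤ ‖∫ s in u..p, E lam f s‖ + ‖∫ s in p..q, E lam f s‖ + ‖∫ s in q..v, E lam f s‖ := by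
        rw [hsplit]
        exact le_trans (norm_add_le _ _) (by gcongr <;> exact norm_add_le _ _)
    _ ≤ A * (lam*ρ) ^ (-(1:ℝ)/k) + 2*ρ/μ + A * (lam*ρ) ^ (-(1:ℝ)/k) := by
        gcongr
    _ = (2*A+2) * (lam * μ) ^ (-(1:ℝ)/((k:ℝ)+1)) := by
        rw [key1]
        have : 2*ρ/μ = 2*(ρ/μ) := by ring
        rw [this, key2]
        ring
    _ = (2*A+2) * (lam * μ) ^ (-(1:ℝ)/(k+1)) := by
        norm_cast
end Split

/-- One step of the van der Corput induction, absolute-value version. -/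
lemma vdc_split (k : ℕ) (hk : 1 ≤ k) (A : ℝ) (hA : 0 < A)
    (IH : ∀ f : ℝ → ℝ, ContDiff ℝ ∞ f → ∀ u v μ lam : ℝ, u ≤ v → 0 < μ → 0 < lam →
      (∀ s ∈ Icc u v, μ ≤ |iteratedDeriv k f s|) →
      ((∀ s ∈ Icc u v, 0 ≤ iteratedDeriv (k+1) f s) ∨
        (∀ s ∈ Icc u v, iteratedDeriv (k+1) f s ≤ 0)) →
      ‖∫ s in u..v, E lam f s‖ ≤ A * (lam * μ) ^ (-(1:ℝ)/k)) :
    ∀ f : ℝ → ℝ, ContDiff ℝ ∞ f → ∀ u v μ lam : ℝ, u ≤ v → 0 < μ → 0 < lam →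
      (∀ s ∈ Icc u v, μ ≤ |iteratedDeriv (k+1) f s|) →
      ‖∫ s in u..v, E lam f s‖ ≤ (2*A+2) * (lam * μ) ^ (-(1:ℝ)/(k+1)) := by
  intro f hf u v μ lam huv hμ hlam hlow
  have hg'c : Continuous (iteratedDeriv (k+1) f) := (contDiff_iteratedDeriv (k+1) hf).continuous
  rcases sign_constant huv hμ hg'c.continuousOn hlow with hpos | hneg
  · exact vdc_split_main k hk A hA IH f hf u v μ lam huv hμ hlam hpos
  · have hneg' : ∀ s ∈ Icc u v, μ ≤ iteratedDeriv (k+1) (fun t => -f t) s := by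
      intro s hs
      rw [iteratedDeriv_fun_neg]
      linarith [hneg s hs]
    have hbd := vdc_split_main k hk A hA IH (fun t => -f t) (by exact hf.neg)
      u v μ lam huv hμ hlam hneg'
    rwa [norm_integral_E_neg] at hbd

/-- The classical van der Corput lemma for the `k`-th derivative, `k ≥ 2`. -/
lemma vdc (k : ℕ) (hk : 2 ≤ k) :
    ∃ A : ℝ, 0 < A ∧ ∀ f : ℝ → ℝ, ContDiff ℝ ∞ f → ∀ u v μ lam : ℝ,
      u ≤ v → 0 < μ → 0 < lam → (∀ s ∈ Icc u v, μ ≤ |iteratedDeriv k f s|) →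
      ‖∫ s in u..v, E lam f s‖ ≤ A * (lam * μ) ^ (-(1:ℝ)/k) := by
  induction k, hk using Nat.le_induction with
  | base =>
    refine ⟨2*4+2, by norm_num, ?_⟩
    have IH1 : ∀ f : ℝ → ℝ, ContDiff ℝ ∞ f → ∀ u v μ lam : ℝ, u ≤ v → 0 < μ → 0 < lam →
        (∀ s ∈ Icc u v, μ ≤ |iteratedDeriv 1 f s|) →
        ((∀ s ∈ Icc u v, 0 ≤ iteratedDeriv 2 f s) ∨
          (∀ s ∈ Icc u v, iteratedDeriv 2 f s ≤ 0)) →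
        ‖∫ s in u..v, E lam f s‖ ≤ 4 * (lam * μ) ^ (-(1:ℝ)/(1:ℕ)) := by
      intro f hf u v μ lam huv hμ hlam hlow hsign
      have h1 : ∀ s ∈ Icc u v, μ ≤ |deriv f s| := by
        intro s hs; rw [← iteratedDeriv_one]; exact hlow s hs
      have h2 : (∀ s ∈ Icc u v, 0 ≤ deriv (deriv f) s) ∨
          (∀ s ∈ Icc u v, deriv (deriv f) s ≤ 0) := by
        have e2 : iteratedDeriv 2 f = deriv (deriv f) := by
          rw [show (2:ℕ) = 1 + 1 from rfl, iteratedDeriv_succ, iteratedDeriv_one]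
        rwa [e2] at hsign
      have := vdc1 f hf u v μ lam huv hμ hlam h1 h2
      have he : (lam * μ) ^ (-(1:ℝ)/(1:ℕ)) = (lam * μ)⁻¹ := by
        rw [show -(1:ℝ)/((1:ℕ):ℝ) = -1 by norm_num, Real.rpow_neg_one]
      rw [he]
      calc ‖∫ s in u..v, E lam f s‖ ≤ 4 / (lam * μ) := this
        _ = 4 * (lam * μ)⁻¹ := by ring
    have h := vdc_split 1 le_rfl 4 (by norm_num) IH1
    intro f hf u v μ lam huv hμ hlam hlow
    have := h f hf u v μ lam huv hμ hlam hlow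
    norm_num at this ⊢
    exact this
  | succ k hk2 ih =>
    obtain ⟨A, hA, hbound⟩ := ih
    refine ⟨2*A+2, by positivity, ?_⟩
    have h := vdc_split k (by omega) A hA
      (fun f hf u v μ lam huv hμ hlam hlow _ => hbound f hf u v μ lam huv hμ hlam hlow)
    intro f hf u v μ lam huv hμ hlam hlow
    have := h f hf u v μ lam huv hμ hlam hlow
    push_cast at this ⊢
    exact this



section Partition

/-- Greedy partition of an interval adapted to a Lipschitz function: each piece
has either `|h| ≤ ε` throughout or `|h| ≥ ε/2` throughout, and the number of
pieces is bounded in terms of `L(v-u)/ε`. -/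
lemma lipschitz_partition (h : ℝ → ℝ) (hc : Continuous h) (u v L ε : ℝ) (huv : u ≤ v)
    (hL : 0 < L) (hε : 0 < ε)
    (hlip : ∀ x ∈ Icc u v, ∀ y ∈ Icc u v, |h x - h y| ≤ L * |x - y|) :
    ∃ (K : ℕ) (t : ℕ → ℝ), t 0 = u ∧ t K = v ∧ (∀ i, t i ≤ t (i+1)) ∧
      (∀ i, t i ∈ Icc u v) ∧ (K : ℝ) ≤ 2 + 4*L*(v-u)/ε ∧
      ∀ i, (∀ s ∈ Icc (t i) (t (i+1)), ε/2 ≤ |h s|) ∨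
        (∀ s ∈ Icc (t i) (t (i+1)), |h s| ≤ ε) := by
  classical
  set P : ℝ → ℝ → Prop := fun x s => if |h x| ≤ 3*ε/4 then |h s| ≤ ε else ε/2 ≤ |h s| with hP
  set S : ℝ → Set ℝ := fun x => {y ∈ Icc x v | ∀ s ∈ Icc x y, P x s} with hS
  set step : ℝ → ℝ := fun x => sSup (S x) with hstep
  have habs : Continuous fun z => |h z| := hc.abs
  -- basic facts about S
  have hxS : ∀ x ∈ Icc u v, x ∈ S x := by
    intro x hx
    refine ⟨⟨le_refl x, hx.2⟩, ?_⟩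
    intro s hs
    have hsx : s = x := le_antisymm hs.2 hs.1
    subst hsx
    by_cases hb : |h s| ≤ 3*ε/4
    · simp only [hP, hb, if_true]
      linarith
    · simp only [hP, hb, if_false]
      push_neg at hb
      linarith
  have hSne : ∀ x ∈ Icc u v, (S x).Nonempty := fun x hx => ⟨x, hxS x hx⟩
  have hSbdd : ∀ x, BddAbove (S x) := fun x => ⟨v, fun y hy => hy.1.2⟩
  have hstep_ge : ∀ x ∈ Icc u v, x ≤ step x := fun x hx => le_csSup (hSbdd x) (hxS x hx)
  have hstep_le : ∀ x ∈ Icc u v, step x ≤ v := fun x hx =>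
    csSup_le (hSne x hx) (fun y hy => hy.1.2)
  have hstep_mem : ∀ x ∈ Icc u v, step x ∈ Icc u v := fun x hx =>
    ⟨hx.1.trans (hstep_ge x hx), hstep_le x hx⟩
  -- the property holds on all of [x, step x]
  have hprop : ∀ x ∈ Icc u v, ∀ s ∈ Icc x (step x), P x s := by
    intro x hx s hs
    have hCclosed : IsClosed {z : ℝ | P x z} := by
      by_cases hb : |h x| ≤ 3*ε/4
      · simp only [hP, hb, if_true]
        exact isClosed_le habs continuous_const
      · simp only [hP, hb, if_false]
        exact isClosed_le continuous_const habs
    rcases lt_or_eq_of_le hs.2 with hlt | heq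
    · obtain ⟨y, hyS, hy⟩ := exists_lt_of_lt_csSup (hSne x hx) hlt
      exact hyS.2 s ⟨hs.1, hy.le⟩
    · rcases lt_or_eq_of_le hs.1 with hxs | hxs
      · have hsub : Ico x s ⊆ {z : ℝ | P x z} := by
          intro z hz
          obtain ⟨y, hyS, hy⟩ := exists_lt_of_lt_csSup (hSne x hx) (heq ▸ hz.2)
          exact hyS.2 z ⟨hz.1, hy.le⟩
        have hscl : s ∈ closure (Ico x s) := by
          rw [closure_Ico (ne_of_lt hxs)]
          exact ⟨hxs.le, le_refl s⟩
        exact hCclosed.closure_subset ((closure_mono hsub).trans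
          (by rw [hCclosed.closure_eq]) hscl)
      · subst hxs
        exact (hxS x hx).2 x ⟨le_refl x, le_refl x⟩
  -- exit values
  have hexit : ∀ x ∈ Icc u v, step x < v →
      (|h x| ≤ 3*ε/4 → ε ≤ |h (step x)|) ∧ (¬(|h x| ≤ 3*ε/4) → |h (step x)| ≤ ε/2) := by
    intro x hx hsv
    constructor
    · intro hb
      by_contra hcon
      push_neg at hcon
      have hopen : IsOpen {z : ℝ | |h z| < ε} := isOpen_lt habs continuous_const
      obtain ⟨δ, hδ, hball⟩ := Metric.isOpen_iff.mp hopen (step x) hcon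
      set w' : ℝ := min v (step x + δ/2) with hw'
      have hww' : step x < w' := by
        rw [hw']
        apply lt_min hsv
        linarith
      have hw'v : w' ≤ v := min_le_left _ _
      have hw'S : w' ∈ S x := by
        refine ⟨⟨(hstep_ge x hx).trans hww'.le, hw'v⟩, ?_⟩
        intro s hs
        rcases le_or_gt s (step x) with hsle | hsgt
        · exact hprop x hx s ⟨hs.1, hsle⟩
        · simp only [hP, hb, if_true]
          have hmem : s ∈ Metric.ball (step x) δ := by
            rw [Metric.mem_ball, Real.dist_eq, abs_of_pos (by linarith)]
            have := hs.2.trans (min_le_right v (step x + δ/2))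
            linarith
          exact (hball hmem).le
      exact absurd (le_csSup (hSbdd x) hw'S) (not_le.mpr hww')
    · intro hb
      by_contra hcon
      push_neg at hcon
      have hopen : IsOpen {z : ℝ | ε/2 < |h z|} := isOpen_lt continuous_const habs
      obtain ⟨δ, hδ, hball⟩ := Metric.isOpen_iff.mp hopen (step x) hcon
      set w' : ℝ := min v (step x + δ/2) with hw'
      have hww' : step x < w' := by
        rw [hw']
        apply lt_min hsv
        linarith
      have hw'v : w' ≤ v := min_le_left _ _
      have hw'S : w' ∈ S x := by
        refine ⟨⟨(hstep_ge x hx).trans hww'.le, hw'v⟩, ?_⟩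
        intro s hs
        rcases le_or_gt s (step x) with hsle | hsgt
        · exact hprop x hx s ⟨hs.1, hsle⟩
        · simp only [hP, hb, if_false]
          have hmem : s ∈ Metric.ball (step x) δ := by
            rw [Metric.mem_ball, Real.dist_eq, abs_of_pos (by linarith)]
            have := hs.2.trans (min_le_right v (step x + δ/2))
            linarith
          exact (hball hmem).le
      exact absurd (le_csSup (hSbdd x) hw'S) (not_le.mpr hww')
  -- progress
  have hprog : ∀ x ∈ Icc u v, step x < v → ε/(4*L) ≤ step x - x := by
    intro x hx hsv
    have hwmem : step x ∈ Icc u v := hstep_mem x hx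
    have hlipx := hlip (step x) hwmem x hx
    rw [abs_of_nonneg (by linarith [hstep_ge x hx] : (0:ℝ) ≤ step x - x)] at hlipx
    have hdiff : ε/4 ≤ |h (step x) - h x| := by
      by_cases hb : |h x| ≤ 3*ε/4
      · have hex := (hexit x hx hsv).1 hb
        calc ε/4 = ε - 3*ε/4 := by ring
          _ ≤ |h (step x)| - |h x| := by linarith
          _ ≤ |h (step x) - h x| := by
              have := abs_sub_abs_le_abs_sub (h (step x)) (h x)
              linarith
      · have hex := (hexit x hx hsv).2 hb
        push_neg at hb
        calc ε/4 ≤ |h x| - |h (step x)| := by linarith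
          _ ≤ |h x - h (step x)| := by
              have := abs_sub_abs_le_abs_sub (h x) (h (step x))
              linarith
          _ = |h (step x) - h x| := abs_sub_comm _ _
    rw [div_le_iff₀ (by positivity : (0:ℝ) < 4*L)]
    nlinarith [hlipx, hdiff]
  -- the sequence
  set t : ℕ → ℝ := fun i => step^[i] u with ht
  have ht0 : t 0 = u := rfl
  have htsucc : ∀ i, t (i+1) = step (t i) := by
    intro i
    rw [ht]
    simp [Function.iterate_succ_apply']
  have htmem : ∀ i, t i ∈ Icc u v := by
    intro i
    induction i with
    | zero => exact ⟨le_refl u, huv⟩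
    | succ n ihn => rw [htsucc]; exact hstep_mem _ ihn
  have htmono : ∀ i, t i ≤ t (i+1) := by
    intro i
    rw [htsucc]
    exact hstep_ge _ (htmem i)
  have htmono' : ∀ i j, i ≤ j → t i ≤ t j := by
    intro i j hij
    induction hij with
    | refl => exact le_refl _
    | step _ ihn => exact ihn.trans (htmono _)
  set r : ℝ := 4*L*(v-u)/ε with hr
  have hrnonneg : 0 ≤ r := by
    rw [hr]
    have hvu : 0 ≤ v - u := by linarith
    positivity
  set K : ℕ := ⌈r⌉₊ + 1 with hK
  have hKbound : (K : ℝ) ≤ 2 + r := by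
    rw [hK]
    push_cast
    have := Nat.ceil_lt_add_one hrnonneg
    linarith
  have hKgt : r < (K : ℝ) := by
    rw [hK]
    push_cast
    have := Nat.le_ceil r
    linarith
  have htK : t K = v := by
    by_contra hne
    have hlt : t K < v := lt_of_le_of_ne (htmem K).2 hne
    have hcum : ∀ n, n ≤ K → u + n * (ε/(4*L)) ≤ t n := by
      intro n hn
      induction n with
      | zero => simp [ht0]
      | succ nn ihn =>
        have h1 : nn ≤ K := by omega
        have h2 := ihn h1
        have hstepnn : step (t nn) < v := by
          rw [← htsucc]
          exact lt_of_le_of_lt (htmono' (nn+1) K hn) hlt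
        have hpr := hprog (t nn) (htmem nn) hstepnn
        rw [htsucc]
        push_cast
        linarith
    have hfin := hcum K le_rfl
    have hKe : r * (ε/(4*L)) = v - u := by
      rw [hr]
      field_simp
    have hKs : (v - u) < (K:ℝ) * (ε/(4*L)) := by
      rw [← hKe]
      apply mul_lt_mul_of_pos_right hKgt
      positivity
    linarith
  refine ⟨K, t, ht0, htK, htmono, htmem, hKbound, ?_⟩
  intro i
  have hPi := hprop (t i) (htmem i)
  by_cases hb : |h (t i)| ≤ 3*ε/4
  · right
    intro s hs
    have hPs := hPi s (by rwa [htsucc] at hs)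
    simpa only [hP, hb, if_true] using hPs
  · left
    intro s hs
    have hPs := hPi s (by rwa [htsucc] at hs)
    simpa only [hP, hb, if_false] using hPs

end Partition


section Claim

/-- The Björk–Arhipov downward recursion: if the tail sum `∑_{i=j}^m |f^{(i)}|` is bounded
below on `[u,v] ⊆ [a,b]`, the oscillatory integral decays like `lam^{-1/m}`. -/
lemma claim (m : ℕ) (a b c₁ c₂ : ℝ) (hab : a ≤ b) (hc₁ : 0 < c₁) (hc₂ : 0 < c₂) :
    ∀ d j : ℕ, 2 ≤ j → j + d = m →
    ∃ B : ℝ, 0 < B ∧ ∀ f : ℝ → ℝ, ContDiff ℝ ∞ f →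
      (∀ s ∈ Icc a b, ∑ i ∈ Finset.Icc 2 m, |iteratedDeriv i f s| ≤ c₂) →
      ∀ u v : ℝ, a ≤ u → u ≤ v → v ≤ b →
      (∀ s ∈ Icc u v, c₁ / 2^(j-2) ≤ ∑ i ∈ Finset.Icc j m, |iteratedDeriv i f s|) →
      ∀ lam : ℝ, 1 ≤ lam →
      ‖∫ s in u..v, E lam f s‖ ≤ B * lam ^ (-(1:ℝ)/m) := by
  intro d
  induction d with
  | zero =>
    intro j hj2 hjm
    rw [Nat.add_zero] at hjm
    subst hjm
    set δ : ℝ := c₁ / 2^(j-2) with hδdef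
    have hδ : 0 < δ := by rw [hδdef]; positivity
    obtain ⟨A, hA, hvdc⟩ := vdc j hj2
    refine ⟨A * δ ^ (-(1:ℝ)/j), by positivity, ?_⟩
    intro f hf _ u v hau huv hvb hlow lam hlam
    have hlam0 : 0 < lam := lt_of_lt_of_le one_pos hlam
    have hlow' : ∀ s ∈ Icc u v, δ ≤ |iteratedDeriv j f s| := by
      intro s hs
      have := hlow s hs
      rwa [Finset.Icc_self, Finset.sum_singleton] at this
    have hbd := hvdc f hf u v δ lam huv hδ hlam0 hlow'
    calc ‖∫ s in u..v, E lam f s‖ ≤ A * (lam * δ) ^ (-(1:ℝ)/j) := hbd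
      _ = A * δ ^ (-(1:ℝ)/j) * lam ^ (-(1:ℝ)/j) := by
          rw [Real.mul_rpow hlam0.le hδ.le]; ring
  | succ d ihd =>
    intro j hj2 hjm
    have hjm1 : (j+1) + d = m := by omega
    have hjltm : j < m := by omega
    obtain ⟨B, hB, hIH⟩ := ihd (j+1) (by omega) hjm1
    obtain ⟨A, hA, hvdc⟩ := vdc j hj2
    set δ : ℝ := c₁ / 2^(j-2) with hδdef
    have hδ : 0 < δ := by rw [hδdef]; positivity
    set ε : ℝ := δ/2 with hεdef
    have hε : 0 < ε := by rw [hεdef]; positivity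
    have hδsucc : c₁ / 2^((j+1)-2) = δ/2 := by
      rw [hδdef]
      have : (j+1) - 2 = (j-2) + 1 := by omega
      rw [this, pow_succ]
      ring
    set C : ℝ := A * (ε/2) ^ (-(1:ℝ)/j) + B with hC
    have hCpos : 0 < C := by rw [hC]; positivity
    have hba : (0:ℝ) ≤ b - a := by linarith
    refine ⟨(2 + 4*c₂*(b-a)/ε) * C, by positivity, ?_⟩
    intro f hf hglob u v hau huv hvb hlow lam hlam
    have hlam0 : 0 < lam := lt_of_lt_of_le one_pos hlam
    have hm2 : 2 ≤ m := by omega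
    have hmpos : (0:ℝ) < (m:ℝ) := by positivity
    have hsub : Icc u v ⊆ Icc a b := Icc_subset_Icc hau hvb
    set h : ℝ → ℝ := iteratedDeriv j f with hh
    have hhc : Continuous h := (contDiff_iteratedDeriv j hf).continuous
    have hEc : Continuous (E lam f) := E_continuous lam hf.continuous
    -- Lipschitz bound for h on [u,v]
    have hlip : ∀ x ∈ Icc u v, ∀ y ∈ Icc u v, |h x - h y| ≤ c₂ * |x - y| := by
      have haux : ∀ x ∈ Icc u v, ∀ y ∈ Icc u v, x < y → |h y - h x| ≤ c₂ * (y - x) := by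
        intro x hx y hy hxy
        obtain ⟨c, hcmem, hceq⟩ := exists_hasDerivAt_eq_slope h (iteratedDeriv (j+1) f) hxy
          hhc.continuousOn (fun z _ => iteratedDeriv_hasDerivAt j hf z)
        have hcab : c ∈ Icc a b := hsub ⟨hx.1.trans hcmem.1.le, hcmem.2.le.trans hy.2⟩
        have hone : |iteratedDeriv (j+1) f c| ≤ c₂ := by
          have hmem : (j+1) ∈ Finset.Icc 2 m := by
            rw [Finset.mem_Icc]; omega
          have := Finset.single_le_sum
            (f := fun i => |iteratedDeriv i f c|) (fun i _ => abs_nonneg _) hmem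
          exact this.trans (hglob c hcab)
        have := hceq ▸ hone
        rw [abs_div] at this
        rw [abs_of_pos (by linarith : (0:ℝ) < y - x)] at this
        rw [div_le_iff₀ (by linarith : (0:ℝ) < y - x)] at this
        linarith [mul_comm c₂ (y - x)]
      intro x hx y hy
      rcases lt_trichotomy x y with hxy | hxy | hxy
      · have := haux x hx y hy hxy
        rw [abs_sub_comm (h x) (h y)]
        rwa [abs_sub_comm x y, abs_of_pos (by linarith : (0:ℝ) < y - x)]
      · subst hxy; simp
      · have := haux y hy x hx hxy
        rwa [abs_of_pos (by linarith : (0:ℝ) < x - y)]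
    obtain ⟨K, t, ht0, htK, htmono, htmem, hKbd, htprop⟩ :=
      lipschitz_partition h hhc u v c₂ ε huv hc₂ hε hlip
    have hj0 : (0:ℝ) < (j:ℝ) := by exact_mod_cast lt_of_lt_of_le two_pos hj2
    have hjmR : (j:ℝ) ≤ (m:ℝ) := by exact_mod_cast hjltm.le
    have hpow : lam ^ (-(1:ℝ)/j) ≤ lam ^ (-(1:ℝ)/m) := by
      apply Real.rpow_le_rpow_of_exponent_le hlam
      rw [neg_div, neg_div, neg_le_neg_iff]
      exact one_div_le_one_div_of_le hj0 hjmR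
    have hlamnn : (0:ℝ) ≤ lam ^ (-(1:ℝ)/(m:ℝ)) := Real.rpow_nonneg hlam0.le _
    have hpiece : ∀ i : ℕ, ‖∫ s in t i..t (i+1), E lam f s‖ ≤ C * lam ^ (-(1:ℝ)/m) := by
      intro i
      have hsub' : Icc (t i) (t (i+1)) ⊆ Icc u v :=
        Icc_subset_Icc (htmem i).1 (htmem (i+1)).2
      rcases htprop i with hbig | hsmall
      · have hb := hvdc f hf (t i) (t (i+1)) (ε/2) lam (htmono i) (by positivity) hlam0
          (fun s hs => hbig s hs)
        calc ‖∫ s in t i..t (i+1), E lam f s‖ ≤ A * (lam * (ε/2)) ^ (-(1:ℝ)/j) := hb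
          _ = A * (ε/2) ^ (-(1:ℝ)/j) * lam ^ (-(1:ℝ)/j) := by
              rw [Real.mul_rpow hlam0.le (by positivity)]; ring
          _ ≤ A * (ε/2) ^ (-(1:ℝ)/j) * lam ^ (-(1:ℝ)/m) := by
              apply mul_le_mul_of_nonneg_left hpow (by positivity)
          _ ≤ C * lam ^ (-(1:ℝ)/m) := by
              apply mul_le_mul_of_nonneg_right _ hlamnn
              rw [hC]
              linarith
      · have hlow' : ∀ s ∈ Icc (t i) (t (i+1)), c₁/2^((j+1)-2) ≤
            ∑ i' ∈ Finset.Icc (j+1) m, |iteratedDeriv i' f s| := by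
          intro s hs
          have hsv := hsub' hs
          have h1 := hlow s hsv
          have hsplit2 : ∑ i' ∈ Finset.Icc j m, |iteratedDeriv i' f s|
              = |iteratedDeriv j f s| + ∑ i' ∈ Finset.Icc (j+1) m, |iteratedDeriv i' f s| := by
            rw [← Finset.insert_Icc_add_one_left_eq_Icc (le_of_lt hjltm), Finset.sum_insert (by simp)]
          have h2 : |iteratedDeriv j f s| ≤ ε := hsmall s hs
          rw [hδsucc]
          rw [hsplit2] at h1
          rw [hεdef] at h2
          linarith
        have hb := hIH f hf hglob (t i) (t (i+1)) (hau.trans (htmem i).1) (htmono i)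
          ((htmem (i+1)).2.trans hvb) hlow' lam hlam
        calc ‖∫ s in t i..t (i+1), E lam f s‖ ≤ B * lam ^ (-(1:ℝ)/m) := hb
          _ ≤ C * lam ^ (-(1:ℝ)/m) := by
              apply mul_le_mul_of_nonneg_right _ hlamnn
              rw [hC]
              have : (0:ℝ) < A * (ε/2) ^ (-(1:ℝ)/j) := by positivity
              linarith
    have hsum : ∫ s in u..v, E lam f s
        = ∑ i ∈ Finset.range K, ∫ s in t i..t (i+1), E lam f s := by
      rw [intervalIntegral.sum_integral_adjacent_intervals
        (fun k _ => hEc.intervalIntegrable _ _)]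
      rw [ht0, htK]
    calc ‖∫ s in u..v, E lam f s‖
        = ‖∑ i ∈ Finset.range K, ∫ s in t i..t (i+1), E lam f s‖ := by rw [hsum]
      _ ≤ ∑ i ∈ Finset.range K, ‖∫ s in t i..t (i+1), E lam f s‖ := norm_sum_le _ _
      _ ≤ ∑ _i ∈ Finset.range K, C * lam ^ (-(1:ℝ)/m) :=
          Finset.sum_le_sum (fun i _ => hpiece i)
      _ = (K:ℝ) * (C * lam ^ (-(1:ℝ)/m)) := by
          rw [Finset.sum_const, Finset.card_range, nsmul_eq_mul]
      _ ≤ (2 + 4*c₂*(b-a)/ε) * (C * lam ^ (-(1:ℝ)/m)) := by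
          apply mul_le_mul_of_nonneg_right _ (by positivity)
          calc (K:ℝ) ≤ 2 + 4*c₂*(v-u)/ε := hKbd
            _ ≤ 2 + 4*c₂*(b-a)/ε := by
                have hvu : v - u ≤ b - a := by linarith
                gcongr
      _ = (2 + 4*c₂*(b-a)/ε) * C * lam ^ (-(1:ℝ)/m) := by ring

end Claim


section Final

/-- Norm-invariance of the interval integral under conjugation. -/
lemma norm_intervalIntegral_conj (F : ℝ → ℂ) (u v : ℝ) :
    ‖∫ s in u..v, (starRingEnd ℂ) (F s)‖ = ‖∫ s in u..v, F s‖ := by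
  have hconj : ∫ s in u..v, (starRingEnd ℂ) (F s)
      = (starRingEnd ℂ) (∫ s in u..v, F s) := by
    rw [intervalIntegral_eq_integral_uIoc, intervalIntegral_eq_integral_uIoc,
      integral_conj]
    rcases le_or_gt u v with h | h
    · simp [h]
    · simp [not_le.mpr h, neg_one_smul, map_neg]
  rw [hconj, RCLike.norm_conj]

lemma le_biSup_abs {φ : ℝ → ℝ} (hφ : Continuous φ) {a b : ℝ} (hab : a ≤ b) :
    ∀ s ∈ Icc a b, |φ s| ≤ ⨆ t ∈ Icc a b, |φ t| := by
  obtain ⟨x, hxmem, hmax⟩ := isCompact_Icc.exists_isMaxOn ⟨a, le_refl a, hab⟩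
    (hφ.abs.continuousOn : ContinuousOn (fun t => |φ t|) (Icc a b))
  have hbdd : BddAbove (Set.range fun s => ⨆ _ : s ∈ Icc a b, |φ s|) := by
    refine ⟨|φ x|, ?_⟩
    rintro y ⟨s, rfl⟩
    show (⨆ _ : s ∈ Icc a b, |φ s|) ≤ |φ x|
    by_cases hs : s ∈ Icc a b
    · have he : (⨆ _ : s ∈ Icc a b, |φ s|) = |φ s| := ciSup_pos hs
      rw [he]
      exact hmax hs
    · have he : (⨆ _ : s ∈ Icc a b, |φ s|) = 0 :=
        @Real.iSup_of_isEmpty _ (isEmpty_Prop.mpr hs) _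
      rw [he]
      exact abs_nonneg _
  intro s hs
  have he : (⨆ _ : s ∈ Icc a b, |φ s|) = |φ s| := ciSup_pos hs
  calc |φ s| = ⨆ _ : s ∈ Icc a b, |φ s| := he.symm
    _ ≤ ⨆ t ∈ Icc a b, |φ t| := le_ciSup hbdd s

lemma rpow_half_le {m : ℕ} (hm : 1 ≤ m) {lam : ℝ} (h0 : 0 ≤ lam) (h1 : lam ≤ 1) :
    (1/2 : ℝ) ≤ (1 + lam) ^ (-(1:ℝ)/m) := by
  have hmR : (1:ℝ) ≤ (m:ℝ) := by exact_mod_cast hm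
  have hpos : (0:ℝ) < 1 + lam := by linarith
  have hexp : -(1:ℝ)/m = -(1/m) := by ring
  rw [hexp, Real.rpow_neg hpos.le]
  have h2 : (1 + lam) ^ ((1:ℝ)/m) ≤ 2 := by
    calc (1 + lam) ^ ((1:ℝ)/m) ≤ (2:ℝ) ^ ((1:ℝ)/m) :=
          Real.rpow_le_rpow hpos.le (by linarith) (by positivity)
      _ ≤ (2:ℝ) ^ (1:ℝ) := Real.rpow_le_rpow_of_exponent_le (by norm_num)
          (by rw [div_le_one (by linarith : (0:ℝ) < (m:ℝ))]; exact hmR)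
      _ = 2 := Real.rpow_one 2
  have hppos : (0:ℝ) < (1 + lam) ^ ((1:ℝ)/m) := Real.rpow_pos_of_pos hpos _
  have h3 := one_div_le_one_div_of_le hppos h2
  rw [one_div, one_div] at h3
  calc (1/2:ℝ) = 2⁻¹ := by norm_num
    _ ≤ ((1 + lam) ^ ((1:ℝ)/(m:ℝ)))⁻¹ := h3
  
lemma rpow_decay_le {m : ℕ} (hm : 1 ≤ m) {lam : ℝ} (hlam : 1 ≤ lam) :
    lam ^ (-(1:ℝ)/m) ≤ 2 * (1 + lam) ^ (-(1:ℝ)/m) := by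
  have hmR : (1:ℝ) ≤ (m:ℝ) := by exact_mod_cast hm
  have hl0 : (0:ℝ) < lam := by linarith
  have hpos : (0:ℝ) < 1 + lam := by linarith
  have hexp : -(1:ℝ)/m = -(1/m) := by ring
  rw [hexp, Real.rpow_neg hpos.le, Real.rpow_neg hl0.le]
  have h1 : (1 + lam) ^ ((1:ℝ)/m) ≤ 2 * lam ^ ((1:ℝ)/m) := by
    calc (1 + lam) ^ ((1:ℝ)/m) ≤ (2*lam) ^ ((1:ℝ)/m) :=
          Real.rpow_le_rpow hpos.le (by linarith) (by positivity)
      _ = (2:ℝ) ^ ((1:ℝ)/m) * lam ^ ((1:ℝ)/m) := Real.mul_rpow (by norm_num) hl0.le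
      _ ≤ 2 * lam ^ ((1:ℝ)/m) := by
          apply mul_le_mul_of_nonneg_right _ (Real.rpow_nonneg hl0.le _)
          calc (2:ℝ) ^ ((1:ℝ)/m) ≤ (2:ℝ) ^ (1:ℝ) := Real.rpow_le_rpow_of_exponent_le
                (by norm_num) (by rw [div_le_one (by linarith : (0:ℝ) < (m:ℝ))]; exact hmR)
            _ = 2 := Real.rpow_one 2
  have hp1 : (0:ℝ) < (1 + lam) ^ ((1:ℝ)/m) := Real.rpow_pos_of_pos hpos _
  have hp2 : (0:ℝ) < lam ^ ((1:ℝ)/m) := Real.rpow_pos_of_pos hl0 _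
  have goal2 : (1:ℝ) ≤ (2 * (1/(1+lam) ^ ((1:ℝ)/(m:ℝ)))) * lam ^ ((1:ℝ)/(m:ℝ)) := by
    rw [show (2 * (1/(1+lam) ^ ((1:ℝ)/(m:ℝ)))) * lam ^ ((1:ℝ)/(m:ℝ))
        = 2 * lam ^ ((1:ℝ)/(m:ℝ)) / (1+lam) ^ ((1:ℝ)/(m:ℝ)) by ring]
    rw [le_div_iff₀ hp1, one_mul]
    exact h1
  calc (lam ^ ((1:ℝ)/(m:ℝ)))⁻¹ = 1/(lam ^ ((1:ℝ)/(m:ℝ))) := (one_div _).symm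
    _ ≤ 2 * (1/(1+lam) ^ ((1:ℝ)/(m:ℝ))) := by
        rw [div_le_iff₀ hp2]
        exact goal2
    _ = 2 * ((1+lam) ^ ((1:ℝ)/(m:ℝ)))⁻¹ := by
        rw [one_div ((1+lam) ^ ((1:ℝ)/(m:ℝ)))]

end Final

end VDC

end

/-- Van der Corput–type lemma of Björk–Arhipov: if `c₁ ≤ ∑_{j=2}^m |f^{(j)}(s)| ≤ c₂` on the
compact interval `[a,b]`, then the oscillatory integral with phase `λ f` and `C¹` amplitude `g`
is bounded by `C ‖g‖_{C¹} (1+|λ|)^{-1/m}`, with `C` depending only on `c₁, c₂, m, b-a`. -/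
theorem van_der_corput_bjork_arhipov
    (m : ℕ) (hm : 2 ≤ m) (a b c₁ c₂ : ℝ) (hab : a ≤ b) (hc₁ : 0 < c₁) (hc₂ : 0 < c₂) :
    ∃ C > 0, ∀ f g : ℝ → ℝ, ContDiff ℝ (⊤ : ℕ∞) f → ContDiff ℝ 1 g →
      (∀ s ∈ Set.Icc a b,
        c₁ ≤ ∑ j ∈ Finset.Icc 2 m, |iteratedDeriv j f s| ∧
        ∑ j ∈ Finset.Icc 2 m, |iteratedDeriv j f s| ≤ c₂) →
      ∀ lam : ℝ,
        ‖∫ s in a..b, Complex.exp (Complex.I * (lam : ℂ) * (f s : ℂ)) * (g s : ℂ)‖ ≤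
          C * ((⨆ s ∈ Set.Icc a b, |g s|) + (⨆ s ∈ Set.Icc a b, |deriv g s|)) *
            (1 + |lam|) ^ (-(1 : ℝ) / m) := by
  obtain ⟨B, hB, hcore⟩ := VDC.claim m a b c₁ c₂ hab hc₁ hc₂ (m-2) 2 le_rfl (by omega)
  have hba : (0:ℝ) ≤ b - a := by linarith
  refine ⟨2*(b-a) + 2*B*(1+(b-a)) + 1, by positivity, ?_⟩
  intro f g hf hg hyp lam
  have hf' : ContDiff ℝ (⊤ : ℕ∞) f := hf.of_le (by simp)
  have hgc : Continuous g := hg.continuous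
  have hgd : Continuous (deriv g) := hg.continuous_deriv le_rfl
  set M₀ := ⨆ s ∈ Set.Icc a b, |g s| with hM₀def
  set M₁ := ⨆ s ∈ Set.Icc a b, |deriv g s| with hM₁def
  have hM₀ : ∀ s ∈ Set.Icc a b, |g s| ≤ M₀ := VDC.le_biSup_abs hgc hab
  have hM₁ : ∀ s ∈ Set.Icc a b, |deriv g s| ≤ M₁ := VDC.le_biSup_abs hgd hab
  have haIcc : a ∈ Set.Icc a b := ⟨le_refl a, hab⟩
  have hM₀0 : 0 ≤ M₀ := (abs_nonneg _).trans (hM₀ a haIcc)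
  have hM₁0 : 0 ≤ M₁ := (abs_nonneg _).trans (hM₁ a haIcc)
  set C := 2*(b-a) + 2*B*(1+(b-a)) + 1 with hCdef
  have hCpos : 0 < C := by positivity
  have hglob : ∀ s ∈ Set.Icc a b, ∑ i ∈ Finset.Icc 2 m, |iteratedDeriv i f s| ≤ c₂ :=
    fun s hs => (hyp s hs).2
  have hm1 : 1 ≤ m := by omega
  have hmain : ∀ lam' : ℝ, 0 ≤ lam' →
      ‖∫ s in a..b, VDC.E lam' f s * (g s : ℂ)‖
        ≤ C * (M₀ + M₁) * (1 + lam') ^ (-(1:ℝ)/m) := by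
    intro lam' hl0
    have h1l : (0:ℝ) < 1 + lam' := by linarith
    rcases le_or_gt lam' 1 with hsmall | hbig
    · have htriv : ‖∫ s in a..b, VDC.E lam' f s * (g s:ℂ)‖ ≤ M₀ * |b - a| := by
        apply intervalIntegral.norm_integral_le_of_norm_le_const
        intro x hx
        have hxI : x ∈ Set.Icc a b := by
          rw [Set.uIoc_of_le hab] at hx
          exact ⟨hx.1.le, hx.2⟩
        rw [norm_mul, VDC.norm_E, one_mul, Complex.norm_real, Real.norm_eq_abs]
        exact hM₀ x hxI
      have hhalf := VDC.rpow_half_le hm1 hl0 hsmall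
      calc ‖∫ s in a..b, VDC.E lam' f s * (g s:ℂ)‖ ≤ M₀ * |b-a| := htriv
        _ = M₀ * (b-a) := by rw [abs_of_nonneg hba]
        _ ≤ (C * (M₀+M₁)) * (1/2) := by
            rw [hCdef]
            nlinarith [mul_nonneg hM₁0 hba, add_nonneg hM₀0 hM₁0,
              mul_nonneg (mul_nonneg hB.le (show (0:ℝ) ≤ 1+(b-a) by linarith))
                (add_nonneg hM₀0 hM₁0)]
        _ ≤ (C*(M₀+M₁)) * ((1+lam') ^ (-(1:ℝ)/m)) :=
            mul_le_mul_of_nonneg_left hhalf (by positivity)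
        _ = C * (M₀+M₁) * (1+lam') ^ (-(1:ℝ)/m) := by ring
    · have hl1 : 1 ≤ lam' := hbig.le
      have hEc : Continuous (VDC.E lam' f) := VDC.E_continuous lam' hf'.continuous
      set F : ℝ → ℂ := fun t => ∫ s in a..t, VDC.E lam' f s with hF
      have hFd : ∀ t : ℝ, HasDerivAt F (VDC.E lam' f t) t := fun t =>
        (hEc.integral_hasStrictDerivAt a t).hasDerivAt
      have hFbd : ∀ t ∈ Set.Icc a b, ‖F t‖ ≤ B * lam' ^ (-(1:ℝ)/m) := by
        intro t ht
        have hlow2 : ∀ s ∈ Set.Icc a t, c₁ / 2^(2-2) ≤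
            ∑ i ∈ Finset.Icc 2 m, |iteratedDeriv i f s| := by
          intro s hs
          have hsab : s ∈ Set.Icc a b := ⟨hs.1, hs.2.trans ht.2⟩
          have h1 := (hyp s hsab).1
          norm_num
          exact h1
        exact hcore f hf' hglob a t (le_refl a) ht.1 ht.2 hlow2 lam' hl1
      have hgder : ∀ x ∈ Set.uIcc a b, HasDerivAt (fun s : ℝ => ((g s : ℝ) : ℂ))
          (((deriv g x : ℝ) : ℂ)) x :=
        fun x _ => ((hg.differentiable one_ne_zero x).hasDerivAt).ofReal_comp
      have hFder : ∀ x ∈ Set.uIcc a b, HasDerivAt F (VDC.E lam' f x) x := fun x _ => hFd x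
      have hcoed : Continuous fun s : ℝ => ((deriv g s : ℝ) : ℂ) :=
        Complex.continuous_ofReal.comp hgd
      have hibp := intervalIntegral.integral_mul_deriv_eq_deriv_mul hgder hFder
        (hcoed.intervalIntegrable a b) (hEc.intervalIntegrable a b)
      have hcomm : (∫ s in a..b, VDC.E lam' f s * (g s:ℂ))
          = ∫ x in a..b, ((g x:ℝ):ℂ) * VDC.E lam' f x := by
        apply intervalIntegral.integral_congr
        intro x _
        exact mul_comm _ _
      have hFa : F a = 0 := intervalIntegral.integral_same
      have hbF : ‖((g b:ℝ):ℂ) * F b‖ ≤ M₀ * (B * lam' ^ (-(1:ℝ)/m)) := by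
        rw [norm_mul, Complex.norm_real, Real.norm_eq_abs]
        exact mul_le_mul (hM₀ b ⟨hab, le_refl b⟩) (hFbd b ⟨hab, le_refl b⟩)
          (norm_nonneg _) hM₀0
      have hintF : ‖∫ x in a..b, ((deriv g x:ℝ):ℂ) * F x‖
          ≤ M₁ * (B * lam' ^ (-(1:ℝ)/m)) * |b - a| := by
        apply intervalIntegral.norm_integral_le_of_norm_le_const
        intro x hx
        have hxI : x ∈ Set.Icc a b := by
          rw [Set.uIoc_of_le hab] at hx
          exact ⟨hx.1.le, hx.2⟩
        rw [norm_mul, Complex.norm_real, Real.norm_eq_abs]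
        exact mul_le_mul (hM₁ x hxI) (hFbd x hxI) (norm_nonneg _) hM₁0
      have hdecay := VDC.rpow_decay_le hm1 hl1
      have hstep : ‖∫ s in a..b, VDC.E lam' f s * (g s:ℂ)‖
          ≤ (M₀ + M₁*(b-a)) * (B * lam' ^ (-(1:ℝ)/m)) := by
        rw [hcomm, hibp, hFa, mul_zero, sub_zero]
        calc ‖((g b:ℝ):ℂ) * F b - ∫ x in a..b, ((deriv g x:ℝ):ℂ) * F x‖
            ≤ ‖((g b:ℝ):ℂ) * F b‖ + ‖∫ x in a..b, ((deriv g x:ℝ):ℂ) * F x‖ :=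
              norm_sub_le _ _
          _ ≤ M₀ * (B * lam' ^ (-(1:ℝ)/m)) + M₁ * (B * lam' ^ (-(1:ℝ)/m)) * |b-a| :=
              add_le_add hbF hintF
          _ = (M₀ + M₁*(b-a)) * (B * lam' ^ (-(1:ℝ)/m)) := by
              rw [abs_of_nonneg hba]; ring
      calc ‖∫ s in a..b, VDC.E lam' f s * (g s:ℂ)‖
          ≤ (M₀ + M₁*(b-a)) * (B * lam' ^ (-(1:ℝ)/m)) := hstep
        _ ≤ ((M₀+M₁)*(1+(b-a))) * (B * lam' ^ (-(1:ℝ)/m)) := by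
            apply mul_le_mul_of_nonneg_right _ (by positivity)
            nlinarith [hM₀0, hM₁0, hba]
        _ = (B*(1+(b-a))*(M₀+M₁)) * lam' ^ (-(1:ℝ)/m) := by ring
        _ ≤ (B*(1+(b-a))*(M₀+M₁)) * (2*(1+lam') ^ (-(1:ℝ)/m)) :=
            mul_le_mul_of_nonneg_left hdecay (by positivity)
        _ = (2*B*(1+(b-a))) * (M₀+M₁) * (1+lam') ^ (-(1:ℝ)/m) := by ring
        _ ≤ C * (M₀+M₁) * (1+lam') ^ (-(1:ℝ)/m) := by
            have hCge : 2*B*(1+(b-a)) ≤ C := by rw [hCdef]; nlinarith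
            have hrest : (0:ℝ) ≤ (M₀+M₁) * (1+lam') ^ (-(1:ℝ)/m) := by positivity
            calc (2*B*(1+(b-a))) * (M₀+M₁) * (1+lam') ^ (-(1:ℝ)/m)
                = (2*B*(1+(b-a))) * ((M₀+M₁) * (1+lam') ^ (-(1:ℝ)/m)) := by ring
              _ ≤ C * ((M₀+M₁) * (1+lam') ^ (-(1:ℝ)/m)) :=
                  mul_le_mul_of_nonneg_right hCge hrest
              _ = C * (M₀+M₁) * (1+lam') ^ (-(1:ℝ)/m) := by ring
  rcases le_or_gt 0 lam with hl | hl
  · have hres := hmain lam hl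
    rw [abs_of_nonneg hl]
    exact hres
  · have hres := hmain (-lam) (by linarith)
    rw [abs_of_neg hl]
    have hpt : ∀ s : ℝ, VDC.E (-lam) f s * ((g s:ℝ):ℂ)
        = (starRingEnd ℂ) (VDC.E lam f s * ((g s:ℝ):ℂ)) := by
      intro s
      rw [map_mul, VDC.E, VDC.E, ← Complex.exp_conj]
      congr 1
      · congr 1
        simp only [map_mul, Complex.conj_I, Complex.conj_ofReal]
        push_cast
        ring
      · exact (Complex.conj_ofReal _).symm
    have hnorm : ‖∫ s in a..b, VDC.E (-lam) f s * ((g s:ℝ):ℂ)‖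
        = ‖∫ s in a..b, VDC.E lam f s * ((g s:ℝ):ℂ)‖ := by
      rw [intervalIntegral.integral_congr (fun s _ => hpt s)]
      exact VDC.norm_intervalIntegral_conj _ a b
    rw [hnorm] at hres
    exact hres
end

section
/- Let m, n be integers with 2 ≤ m < n, let s₁, S₂, σ₀ be real constants, and define g(x₁) = s₁ x₁ + S₂ σ₀ x₁^m + x₁^n. Then for every x₁⁰ > 0, g''(x₁⁰) and g'''(x₁⁰) cannot vanish simultaneously; that is, |g''(x₁⁰)| + |g'''(x₁⁰)| > 0. -/
/-!
Writing `P k := iteratedDeriv k (· ^ n)`, the monomials satisfy the Euler-type identity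
`x * P (k + 1) x = (n - k) * P k x`. Hence the combination `x * g''' - (m - 2) * g''` kills the
`x ^ m` term and the linear term, leaving `(n - m) * n * (n - 1) * x ^ (n - 2)`, which is positive
for `x > 0`.
-/

section Monomial

variable {𝕜 : Type*} [NontriviallyNormedField 𝕜]

theorem mul_iteratedDeriv_succ_pow (n k : ℕ) (x : 𝕜) :
    x * iteratedDeriv (k + 1) (· ^ n) x = ((n - k : ℕ) : 𝕜) * iteratedDeriv k (· ^ n) x := by
  simp only [iteratedDeriv_pow, Nat.descFactorial_succ, Nat.cast_mul]
  rcases le_or_gt n k with hnk | hkn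
  · simp [Nat.sub_eq_zero_of_le hnk]
  · rw [show n - k = n - (k + 1) + 1 by omega, pow_succ]
    ring

theorem iteratedDeriv_linear_add_monomials {k : ℕ} (hk : 2 ≤ k) (a b : 𝕜) (m n : ℕ) (x : 𝕜) :
    iteratedDeriv k (fun y => a * y + b * y ^ m + y ^ n) x =
      b * iteratedDeriv k (· ^ m) x + iteratedDeriv k (· ^ n) x := by
  rw [iteratedDeriv_fun_add (by fun_prop) (by fun_prop),
    iteratedDeriv_fun_add (by fun_prop) (by fun_prop), iteratedDeriv_const_mul_field,
    iteratedDeriv_const_mul_field, iteratedDeriv_fun_id]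
  simp [show k ≠ 0 by omega, show k ≠ 1 by omega]

end Monomial

theorem iteratedDeriv_pow_pos {n k : ℕ} (hk : k ≤ n) {x : ℝ} (hx : 0 < x) :
    0 < iteratedDeriv k (· ^ n) x := by
  have := Nat.descFactorial_pos.2 hk
  rw [iteratedDeriv_pow]
  positivity

/-- For `g(x₁) = s₁ x₁ + S₂ σ₀ x₁^m + x₁^n` with `2 ≤ m < n`, the second and third derivatives
of `g` cannot vanish simultaneously at any strictly positive point. -/
theorem second_and_third_deriv_not_both_zero
    (m n : ℕ) (hm : 2 ≤ m) (hmn : m < n) (s₁ S₂ σ₀ : ℝ)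
    (g : ℝ → ℝ) (hg : g = fun x₁ => s₁ * x₁ + S₂ * σ₀ * x₁ ^ m + x₁ ^ n)
    (x₁ : ℝ) (hx₁ : 0 < x₁) :
    0 < |iteratedDeriv 2 g x₁| + |iteratedDeriv 3 g x₁| := by
  have hg₂ : iteratedDeriv 2 g x₁ = S₂ * σ₀ * iteratedDeriv 2 (· ^ m) x₁ +
      iteratedDeriv 2 (· ^ n) x₁ :=
    hg ▸ iteratedDeriv_linear_add_monomials le_rfl s₁ (S₂ * σ₀) m n x₁
  have hg₃ : iteratedDeriv 3 g x₁ = S₂ * σ₀ * iteratedDeriv 3 (· ^ m) x₁ +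
      iteratedDeriv 3 (· ^ n) x₁ :=
    hg ▸ iteratedDeriv_linear_add_monomials (by norm_num) s₁ (S₂ * σ₀) m n x₁
  have euler : x₁ * iteratedDeriv 3 g x₁ - ((m - 2 : ℕ) : ℝ) * iteratedDeriv 2 g x₁ =
      (((n - 2 : ℕ) : ℝ) - ((m - 2 : ℕ) : ℝ)) * iteratedDeriv 2 (· ^ n) x₁ := by
    rw [hg₂, hg₃]
    linear_combination S₂ * σ₀ * mul_iteratedDeriv_succ_pow m 2 x₁ +
      mul_iteratedDeriv_succ_pow n 2 x₁
  have hcoef : ((m - 2 : ℕ) : ℝ) < ((n - 2 : ℕ) : ℝ) := by exact_mod_cast (by omega)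
  have hpos := iteratedDeriv_pow_pos (by omega : 2 ≤ n) hx₁
  by_contra! hle
  have h₂ : iteratedDeriv 2 g x₁ = 0 :=
    abs_nonpos_iff.1 (by linarith [abs_nonneg (iteratedDeriv 3 g x₁)])
  have h₃ : iteratedDeriv 3 g x₁ = 0 :=
    abs_nonpos_iff.1 (by linarith [abs_nonneg (iteratedDeriv 2 g x₁)])
  rw [h₂, h₃, mul_zero, mul_zero, sub_zero] at euler
  exact (mul_pos (sub_pos.2 hcoef) hpos).ne euler
end
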